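/- For every i ≥ 2, the difference graph H_i satisfies cn_ℓ(𝔅ℭ, H_i) ≤ (1/2)·log₂ i + (1/4)·log₂ log₂ i + 2; more generally cn_ℓ(𝔅ℭ, H_i) = (1/2)·log₂ i + (1/4)·log₂ log₂ i + O(1) as i → ∞. -/

import Mathlib

open SimpleGraph

/-- A graph is complete bipartite if its vertex set splits into two disjoint
parts `A, B` and its edges are exactly all pairs between `A` and `B`. -/
def IsCompleteBipartite {W : Type*} (G : SimpleGraph W) : Prop :=
  ∃ A B : Set W, Disjoint A B ∧ A ∪ B = Set.univ ∧
    ∀ u v : W, G.Adj u v ↔ ((u ∈ A ∧ v ∈ B) ∨ (u ∈ B ∧ v ∈ A))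

/-- A difference graph: a bipartite graph (with parts `A, B`) in which the
neighbourhoods of the vertices of `A` are linearly ordered by inclusion
(equivalently, the vertices of `A` can be ordered `a₁, …, a_r` with
`N(aᵢ) ⊆ N(a_{i-1})`). -/
def IsDifferenceGraph {W : Type*} (G : SimpleGraph W) : Prop :=
  ∃ A B : Set W, Disjoint A B ∧ A ∪ B = Set.univ ∧
    (∀ u v : W, G.Adj u v → ((u ∈ A ∧ v ∈ B) ∨ (u ∈ B ∧ v ∈ A))) ∧
    ∀ a ∈ A, ∀ a' ∈ A,
      G.neighborSet a ⊆ G.neighborSet a' ∨ G.neighborSet a' ⊆ G.neighborSet a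

open scoped Classical in
/-- The local covering number of `H` with respect to the class of subgraphs
satisfying `P`: the least `k` such that there is a set `C` of subgraphs of `H`,
each in the class, whose union is `H`, and such that every vertex of `H` lies
in at most `k` members of `C`. -/
noncomputable def localCoverNumber {V : Type*} (H : SimpleGraph V)
    (P : H.Subgraph → Prop) : ℕ :=
  sInf {k | ∃ C : Finset H.Subgraph, (∀ G ∈ C, P G) ∧ C.sup id = ⊤ ∧
    ∀ v : V, (C.filter fun G => v ∈ G.verts).card ≤ k}

/-- The local complete-bipartite covering number `cn_ℓ(𝔅ℭ, H)`. -/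
noncomputable def cbCN {V : Type*} (H : SimpleGraph V) : ℕ :=
  localCoverNumber H fun G => IsCompleteBipartite G.coe

/-- The local difference-graph covering number `cn_ℓ(𝔇, H)`. -/
noncomputable def diffCN {V : Type*} (H : SimpleGraph V) : ℕ :=
  localCoverNumber H fun G => IsDifferenceGraph G.coe

/-- The difference graph `H_i` with vertex set `{a₁,…,a_i} ∪ {b₁,…,b_i}`
(here `a_j = inl j`, `b_l = inr l`, indexed from `0`) and
`N(a_j) = {b₁,…,b_j}`, i.e. `a_j ~ b_l` iff `l ≤ j`. -/
def Hstaircase (i : ℕ) : SimpleGraph (Fin i ⊕ Fin i) where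
  Adj x y := ∃ j l : Fin i, l ≤ j ∧
    ((x = Sum.inl j ∧ y = Sum.inr l) ∨ (x = Sum.inr l ∧ y = Sum.inl j))
  symm := by
    constructor
    intro x y h
    obtain ⟨j, l, hlj, h | h⟩ := h
    · exact ⟨j, l, hlj, Or.inr ⟨h.2, h.1⟩⟩
    · exact ⟨j, l, hlj, Or.inl ⟨h.2, h.1⟩⟩
  loopless := by
    constructor
    intro x h
    obtain ⟨j, l, hlj, ⟨h1, h2⟩ | ⟨h1, h2⟩⟩ := h <;> simp_all

namespace CbCNAux

abbrev Gd := List Bool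

lemma eq_drop_of_suffix {u x : Gd} (h : u <:+ x) :
    u = x.drop (x.length - u.length) := by
  obtain ⟨t, rfl⟩ := h
  rw [List.length_append, Nat.add_sub_cancel, List.drop_left]

lemma suffix_unique {u v x : Gd} (hu : u <:+ x) (hv : v <:+ x)
    (h : u.length = v.length) : u = v := by
  rw [eq_drop_of_suffix hu, eq_drop_of_suffix hv, h]

lemma ne_of_suffixes {a x y : Gd} (hx : (false :: a) <:+ x)
    (hy : (true :: a) <:+ y) : x ≠ y := by
  rintro rfl
  have := suffix_unique hx hy (by simp)
  simp at this

lemma ne_self_of_suffix {a x : Gd} {b : Bool} (hx : (b :: a) <:+ x) : x ≠ a := by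
  rintro rfl
  have := hx.length_le
  simp at this

def sys (p q : ℕ) (a : Gd) : List (Finset Gd × Finset Gd) :=
  match p, q with
  | 0, _ => []
  | _+1, 0 => []
  | p+1, q+1 =>
      ((sys (p+1) q (false :: a)).map (fun pr => (pr.1, insert a pr.2))) ++
      (({a}, ({a} : Finset Gd)) ::
        ((sys p (q+1) (true :: a)).map (fun pr => (insert a pr.1, pr.2))))
  termination_by p + q

lemma sys_length (p q : ℕ) (a : Gd) :
    (sys p q a).length = (p + q).choose p - 1 := by
  match p, q with
  | 0, q => simp [sys]
  | p+1, 0 => simp [sys]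
  | p+1, q+1 =>
    rw [sys]
    have h1 := sys_length (p+1) q (false :: a)
    have h2 := sys_length p (q+1) (true :: a)
    have c1 : 1 ≤ (p + 1 + q).choose (p+1) :=
      Nat.choose_pos (by omega)
    have c2 : 1 ≤ (p + (q + 1)).choose p :=
      Nat.choose_pos (by omega)
    have pas : (p + 1 + (q + 1)).choose (p + 1)
        = (p + (q+1)).choose p + (p + 1 + q).choose (p + 1) := by
      have := Nat.choose_succ_succ (p + q + 1) p
      have e1 : p + 1 + (q + 1) = (p + q + 1) + 1 := by omega
      have e2 : p + (q + 1) = p + q + 1 := by omega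
      have e3 : p + 1 + q = p + q + 1 := by omega
      rw [e1, e2, e3, this]
    simp only [List.length_append, List.length_map, List.length_cons, h1, h2]
    omega
  termination_by p + q

lemma sys_ground (p q : ℕ) (a : Gd) :
    ∀ pr ∈ sys p q a, ∀ x, (x ∈ pr.1 ∨ x ∈ pr.2) → a <:+ x := by
  match p, q with
  | 0, q => simp [sys]
  | p+1, 0 => simp [sys]
  | p+1, q+1 =>
    rw [sys]
    intro pr hpr x hx
    have hsub : ∀ b, a <:+ (b :: a) := fun b => List.suffix_cons b a
    rcases List.mem_append.1 hpr with h | h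
    · obtain ⟨pr', hpr', rfl⟩ := List.mem_map.1 h
      have IH := sys_ground (p+1) q (false :: a) pr' hpr'
      rcases hx with hx | hx
      · exact (hsub false).trans (IH x (Or.inl hx))
      · rcases Finset.mem_insert.1 hx with h | hx
        · exact h ▸ List.suffix_refl x
        · exact (hsub false).trans (IH x (Or.inr hx))
    · rcases List.mem_cons.1 h with rfl | h
      · rcases hx with hx | hx <;> simp_all
      · obtain ⟨pr', hpr', rfl⟩ := List.mem_map.1 h
        have IH := sys_ground p (q+1) (true :: a) pr' hpr'
        rcases hx with hx | hx
        · rcases Finset.mem_insert.1 hx with h | hx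
          · exact h ▸ List.suffix_refl x
          · exact (hsub true).trans (IH x (Or.inl hx))
        · exact (hsub true).trans (IH x (Or.inr hx))
  termination_by p + q



lemma sys_cards (p q : ℕ) (a : Gd) :
    ∀ pr ∈ sys p q a, pr.1.card ≤ p ∧ pr.2.card ≤ q := by
  match p, q with
  | 0, q => simp [sys]
  | p+1, 0 => simp [sys]
  | p+1, q+1 =>
    rw [sys]
    intro pr hpr
    rcases List.mem_append.1 hpr with h | h
    · obtain ⟨pr', hpr', rfl⟩ := List.mem_map.1 h
      have IH := sys_cards (p+1) q (false :: a) pr' hpr'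
      exact ⟨IH.1, (Finset.card_insert_le _ _).trans (by omega)⟩
    · rcases List.mem_cons.1 h with rfl | h
      · constructor <;> simp
      · obtain ⟨pr', hpr', rfl⟩ := List.mem_map.1 h
        have IH := sys_cards p (q+1) (true :: a) pr' hpr'
        exact ⟨(Finset.card_insert_le _ _).trans (by omega), IH.2⟩
  termination_by p + q

lemma sys_not_mem_S {p q : ℕ} {a : Gd} {pr : Finset Gd × Finset Gd} {b : Bool}
    (hpr : pr ∈ sys p q (b :: a)) : a ∉ pr.1 :=
  fun h => ne_self_of_suffix (sys_ground p q (b :: a) pr hpr a (Or.inl h)) rfl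

lemma sys_not_mem_T {p q : ℕ} {a : Gd} {pr : Finset Gd × Finset Gd} {b : Bool}
    (hpr : pr ∈ sys p q (b :: a)) : a ∉ pr.2 :=
  fun h => ne_self_of_suffix (sys_ground p q (b :: a) pr hpr a (Or.inr h)) rfl

lemma sys_cross (p q : ℕ) (a : Gd) :
    ∀ (j l : ℕ) (hj : j < (sys p q a).length) (hl : l < (sys p q a).length),
      (((sys p q a)[j]'hj).1 ∩ ((sys p q a)[l]'hl).2).Nonempty ↔ l ≤ j := by
  match p, q with
  | 0, q => simp [sys]
  | p+1, 0 => simp [sys]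
  | p+1, q+1 =>
    intro j l hj hl
    obtain ⟨E, hE⟩ : ∃ x, x = sys (p+1) q (false :: a) := ⟨_, rfl⟩
    obtain ⟨D, hD⟩ : ∃ x, x = sys p (q+1) (true :: a) := ⟨_, rfl⟩
    obtain ⟨L, hL⟩ : ∃ x, x = (E.map (fun pr => (pr.1, insert a pr.2))) ++
        (({a}, ({a} : Finset Gd)) :: (D.map (fun pr => (insert a pr.1, pr.2)))) := ⟨_, rfl⟩
    have hunf : sys (p+1) (q+1) a = L := by rw [hL, hE, hD, sys]
    have hlen : L.length = E.length + 1 + D.length := by rw [hL]; simp; omega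
    have hjL : j < L.length := hunf ▸ hj
    have hlL : l < L.length := hunf ▸ hl
    have IHE : ∀ (j l : ℕ) (hj : j < E.length) (hl : l < E.length),
        ((E[j]'hj).1 ∩ (E[l]'hl).2).Nonempty ↔ l ≤ j := by
      subst hE; exact sys_cross (p+1) q (false :: a)
    have IHD : ∀ (j l : ℕ) (hj : j < D.length) (hl : l < D.length),
        ((D[j]'hj).1 ∩ (D[l]'hl).2).Nonempty ↔ l ≤ j := by
      subst hD; exact sys_cross p (q+1) (true :: a)
    have Egr : ∀ pr ∈ E, ∀ x, (x ∈ pr.1 ∨ x ∈ pr.2) → (false :: a) <:+ x := by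
      subst hE; exact sys_ground (p+1) q (false :: a)
    have Dgr : ∀ pr ∈ D, ∀ x, (x ∈ pr.1 ∨ x ∈ pr.2) → (true :: a) <:+ x := by
      subst hD; exact sys_ground p (q+1) (true :: a)
    have getE : ∀ (m : ℕ) (hm : m < E.length),
        L[m]'(by omega) = ((E[m]'hm).1, insert a (E[m]'hm).2) := by
      intro m hm
      rw [List.getElem_of_eq hL (by omega),
        List.getElem_append_left (by simpa using hm)]
      simp
    have getM : L[E.length]'(by omega) = ({a}, ({a} : Finset Gd)) := by
      rw [List.getElem_of_eq hL (by omega),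
        List.getElem_append_right (by simp)]
      simp
    have getD : ∀ (m : ℕ) (hm : E.length < m) (hm2 : m < L.length),
        L[m]'hm2 = (insert a ((D[m - E.length - 1]'(by omega)).1),
          (D[m - E.length - 1]'(by omega)).2) := by
      intro m hm hm2
      rw [List.getElem_of_eq hL (by omega),
        List.getElem_append_right (by simp; omega)]
      rw [List.getElem_cons]
      have hne : ¬ (m - (List.map (fun pr => (pr.1, insert a pr.2)) E).length = 0) := by
        simp; omega
      rw [dif_neg hne]
      rw [List.getElem_map]
      congr 2 <;> simp <;> omega
    have hgoal : (((sys (p+1) (q+1) a)[j]'hj).1 ∩ ((sys (p+1) (q+1) a)[l]'hl).2)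
        = ((L[j]'hjL).1 ∩ (L[l]'hlL).2) := by
      congr 1 <;> rw [List.getElem_of_eq hunf]
    rw [hgoal]
    rcases lt_trichotomy j E.length with hjE | hjE | hjE
    · rcases lt_trichotomy l E.length with hlE | hlE | hlE
      · rw [getE j hjE, getE l hlE]
        have hna : a ∉ (E[j]'hjE).1 := fun h =>
          ne_self_of_suffix (Egr _ (List.getElem_mem _) a (Or.inl h)) rfl
        simp only []
        rw [Finset.inter_insert_of_notMem hna]
        exact IHE j l hjE hlE
      · subst hlE
        rw [getE j hjE, getM]
        have hna : a ∉ (E[j]'hjE).1 := fun h =>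
          ne_self_of_suffix (Egr _ (List.getElem_mem _) a (Or.inl h)) rfl
        simp only []
        rw [Finset.inter_singleton_of_notMem hna]
        simp
        omega
      · have hlD : l - E.length - 1 < D.length := by omega
        rw [getE j hjE, getD l hlE hlL]
        simp only []
        constructor
        · rintro ⟨x, hx⟩
          have h1 := Egr _ (List.getElem_mem hjE) x (Or.inl (Finset.mem_inter.1 hx).1)
          have h2 := Dgr _ (List.getElem_mem hlD) x (Or.inr (Finset.mem_inter.1 hx).2)
          exact absurd rfl (ne_of_suffixes h1 h2)
        · intro h; omega
    · subst hjE
      rw [getM]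
      rcases lt_trichotomy l E.length with hlE | hlE | hlE
      · rw [getE l hlE]
        simp only []
        exact ⟨fun _ => by omega, fun _ => ⟨a, by simp⟩⟩
      · subst hlE; rw [getM]; simp
      · have hlD : l - E.length - 1 < D.length := by omega
        rw [getD l hlE hlL]
        have hna : a ∉ (D[l - E.length - 1]'hlD).2 := fun h =>
          ne_self_of_suffix (Dgr _ (List.getElem_mem _) a (Or.inr h)) rfl
        simp only []
        rw [Finset.singleton_inter_of_notMem hna]
        simp
        omega
    · have hjD : j - E.length - 1 < D.length := by omega
      rw [getD j hjE hjL]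
      rcases lt_trichotomy l E.length with hlE | hlE | hlE
      · rw [getE l hlE]
        simp only []
        exact ⟨fun _ => by omega, fun _ => ⟨a, by simp⟩⟩
      · subst hlE; rw [getM]
        simp only []
        exact ⟨fun _ => by omega, fun _ => ⟨a, by simp⟩⟩
      · have hlD : l - E.length - 1 < D.length := by omega
        rw [getD l hlE hlL]
        have hna : a ∉ (D[l - E.length - 1]'hlD).2 := fun h =>
          ne_self_of_suffix (Dgr _ (List.getElem_mem _) a (Or.inr h)) rfl
        simp only []
        rw [Finset.insert_inter_of_notMem hna]
        rw [IHD _ _ hjD hlD]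
        omega
  termination_by p + q


section CoreLB
open Polynomial
open scoped Classical
/-- Any "two-sided skew cross-intersecting" system with parts of size ≤ k
has length at most `C(2k,k) + 1`. -/
lemma core_lb {n k : ℕ} (S T : Fin n → Finset ℕ)
    (hS : ∀ j, (S j).card ≤ k) (hT : ∀ l, (T l).card ≤ k)
    (hne : ∀ j l : Fin n, l ≤ j → (S j ∩ T l).Nonempty)
    (hem : ∀ j l : Fin n, j < l → S j ∩ T l = ∅) :
    n ≤ (2 * k).choose k + 1 := by
  have hch : 1 ≤ (2 * k).choose k := Nat.choose_pos (by omega)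
  rcases le_or_gt n 2 with hn | hn
  · omega
  -- n ≥ 3 ; set m := n - 1
  set m := n - 1 with hm
  have hmn : m < n := by omega
  -- the shifted pairs
  set A : Fin m → Finset ℕ := fun j => S ⟨j, by omega⟩ with hA
  set B : Fin m → Finset ℕ := fun l => T ⟨(l : ℕ) + 1, by omega⟩ with hB
  have hdiag : ∀ j : Fin m, A j ∩ B j = ∅ := by
    intro j
    exact hem _ _ (by simp [Fin.lt_def])
  have hlow : ∀ j l : Fin m, l < j → (A j ∩ B l).Nonempty := by
    intro j l h
    exact hne _ _ (by simp [Fin.le_def]; omega)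
  have hAcard : ∀ j, (A j).card ≤ k := fun j => hS _
  have hBcard : ∀ l, (B l).card ≤ k := fun l => hT _
  -- padding
  set U : Finset ℕ := Finset.univ.biUnion (fun j : Fin m => A j ∪ B j) with hU
  have hPex : ∃ P ⊆ Finset.range (U.card + k) \ U, P.card = k := by
    apply Finset.exists_subset_card_eq
    have h1 : (Finset.range (U.card + k)).card - U.card ≤ (Finset.range (U.card + k) \ U).card :=
      Finset.le_card_sdiff _ _
    rw [Finset.card_range] at h1
    omega
  obtain ⟨P, hPsub, hPcard⟩ := hPex
  have hPU : ∀ x ∈ P, x ∉ U := fun x hx => (Finset.mem_sdiff.1 (hPsub hx)).2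
  have hFex : ∀ l : Fin m, ∃ F ⊆ P, F.card = k - (B l).card := by
    intro l
    apply Finset.exists_subset_card_eq
    omega
  choose F hFsub hFcard using hFex
  set B' : Fin m → Finset ℕ := fun l => B l ∪ F l with hB'
  have hFB : ∀ l, Disjoint (B l) (F l) := by
    intro l
    rw [Finset.disjoint_right]
    intro x hx
    exact fun hxB => hPU x (hFsub l hx)
      (Finset.mem_biUnion.2 ⟨l, Finset.mem_univ _, Finset.mem_union_right _ hxB⟩)
  have hB'card : ∀ l, (B' l).card = k := by
    intro l
    rw [hB']
    rw [Finset.card_union_of_disjoint (hFB l), hFcard l]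
    have := hBcard l
    omega
  have hAF : ∀ j l : Fin m, A j ∩ F l = ∅ := by
    intro j l
    rw [Finset.eq_empty_iff_forall_notMem]
    intro x hx
    rcases Finset.mem_inter.1 hx with ⟨hxA, hxF⟩
    exact hPU x (hFsub l hxF)
      (Finset.mem_biUnion.2 ⟨j, Finset.mem_univ _, Finset.mem_union_left _ hxA⟩)
  have hdiag' : ∀ j : Fin m, A j ∩ B' j = ∅ := by
    intro j
    rw [hB', Finset.inter_union_distrib_left, hdiag j, hAF j j]
    simp
  have hlow' : ∀ j l : Fin m, l < j → ∃ x, x ∈ A j ∧ x ∈ B' l := by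
    intro j l h
    obtain ⟨x, hx⟩ := hlow j l h
    rcases Finset.mem_inter.1 hx with ⟨h1, h2⟩
    exact ⟨x, h1, Finset.mem_union_left _ h2⟩
  -- polynomials
  set hp : Fin m → Polynomial ℚ := fun j => ∏ a ∈ A j, (X - C (a : ℚ)) with hhp
  have hdeg : ∀ j, (hp j).natDegree < k + 1 := by
    intro j
    have h1 : (hp j).natDegree ≤ ∑ a ∈ A j, (X - C (a : ℚ)).natDegree :=
      Polynomial.natDegree_prod_le _ _
    have h2 : ∑ a ∈ A j, (X - C (a : ℚ)).natDegree = (A j).card :=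
      calc ∑ a ∈ A j, (X - C (a : ℚ)).natDegree = ∑ _a ∈ A j, 1 :=
            Finset.sum_congr rfl (fun a _ => Polynomial.natDegree_X_sub_C _)
        _ = (A j).card := by simp
    have := hAcard j
    omega
  have heval0 : ∀ (j : Fin m) (b : ℕ), b ∈ A j → (hp j).eval (b : ℚ) = 0 := by
    intro j b hb
    simp only [hhp]
    rw [Polynomial.eval_prod]
    apply Finset.prod_eq_zero hb
    simp
  have hevaln0 : ∀ (j : Fin m) (b : ℕ), b ∉ A j → (hp j).eval (b : ℚ) ≠ 0 := by
    intro j b hb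
    simp only [hhp]
    rw [Polynomial.eval_prod]
    apply Finset.prod_ne_zero_iff.2
    intro a ha
    simp only [Polynomial.eval_sub, Polynomial.eval_X, Polynomial.eval_C]
    rw [sub_ne_zero]
    exact fun h => hb (Nat.cast_inj.1 h ▸ ha)
  set Em : Fin m → Fin m → ℚ := fun j l => ∏ b ∈ B' l, (hp j).eval (b : ℚ) with hEm
  have hE0 : ∀ j l : Fin m, l < j → Em j l = 0 := by
    intro j l h
    obtain ⟨x, hxA, hxB⟩ := hlow' j l h
    exact Finset.prod_eq_zero hxB (heval0 j x hxA)
  have hEd : ∀ j : Fin m, Em j j ≠ 0 := by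
    intro j
    apply Finset.prod_ne_zero_iff.2
    intro b hb
    apply hevaln0
    intro hbA
    have : b ∈ A j ∩ B' j := Finset.mem_inter.2 ⟨hbA, hb⟩
    rw [hdiag' j] at this
    exact absurd this (Finset.notMem_empty b)
  -- the coefficient vectors
  set u : Fin m → (Sym (Fin (k + 1)) k → ℚ) :=
    fun j μ => (μ.1.map (fun e : Fin (k+1) => (hp j).coeff e)).prod with hu
  have hcardattach : ∀ (l : Fin m) (d : {x // x ∈ B' l} → Fin (k+1)),
      Multiset.card (Multiset.map d Finset.univ.val) = k := by
    intro l d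
    rw [Multiset.card_map]
    have h1 : (Finset.univ : Finset {x // x ∈ B' l}).card = k := by
      rw [Finset.card_univ, Fintype.card_coe, hB'card l]
    exact h1
  set keyf : (l : Fin m) → ({x // x ∈ B' l} → Fin (k+1)) → Sym (Fin (k + 1)) k :=
    fun l d => ⟨Multiset.map d Finset.univ.val, hcardattach l d⟩ with hkeyf
  set W : Fin m → Sym (Fin (k+1)) k → ℚ := fun l μ =>
    ∑ d ∈ Finset.univ.filter (fun d => keyf l d = μ),
      ∏ x : {x // x ∈ B' l}, ((x : ℕ) : ℚ) ^ ((d x : ℕ)) with hW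
  -- the evaluation expansion
  have hexp : ∀ j l : Fin m, Em j l = ∑ μ : Sym (Fin (k + 1)) k, u j μ * W l μ := by
    intro j l
    have step1 : Em j l = ∏ x : {x // x ∈ B' l}, (hp j).eval ((x : ℕ) : ℚ) := by
      simp only [hEm]
      exact (Finset.prod_coe_sort (B' l) (fun b => (hp j).eval (b : ℚ))).symm
    have step2 : ∀ x : {x // x ∈ B' l}, (hp j).eval ((x : ℕ) : ℚ) =
        ∑ e : Fin (k+1), (hp j).coeff e * ((x : ℕ) : ℚ) ^ (e : ℕ) := by
      intro x
      rw [Polynomial.eval_eq_sum_range' (hdeg j)]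
      rw [← Fin.sum_univ_eq_sum_range]
    rw [step1]
    rw [Finset.prod_congr rfl (fun x _ => step2 x)]
    rw [Finset.prod_univ_sum]
    rw [Fintype.piFinset_univ]
    rw [← Finset.sum_fiberwise Finset.univ (keyf l)
      (fun d => ∏ x : {x // x ∈ B' l}, (hp j).coeff (d x) * ((x : ℕ) : ℚ) ^ ((d x : ℕ)))]
    apply Finset.sum_congr rfl
    intro μ _
    rw [hW]
    simp only []
    rw [Finset.mul_sum]
    apply Finset.sum_congr rfl
    intro d hd
    have hkey := (Finset.mem_filter.1 hd).2
    rw [Finset.prod_mul_distrib]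
    congr 1
    -- ∏ x, coeff (d x) = u j μ
    simp only [hu]
    rw [← hkey]
    simp only [hkeyf, Multiset.map_map]
    rw [Finset.prod_eq_multiset_prod]
    rfl
  -- linear independence
  have hli : LinearIndependent ℚ u := by
    rw [Fintype.linearIndependent_iff]
    intro g hg
    have hsum : ∀ l : Fin m, ∑ j : Fin m, g j * Em j l = 0 := by
      intro l
      have h1 : ∀ μ : Sym (Fin (k + 1)) k, ∑ j : Fin m, g j * u j μ = 0 := by
        intro μ
        have := congrFun hg μ
        rw [Finset.sum_apply] at this
        simpa using this
      calc ∑ j : Fin m, g j * Em j l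
          = ∑ j : Fin m, ∑ μ : Sym (Fin (k + 1)) k, g j * (u j μ * W l μ) := by
            apply Finset.sum_congr rfl
            intro j _
            rw [hexp j l, Finset.mul_sum]
        _ = ∑ μ : Sym (Fin (k + 1)) k, (∑ j : Fin m, g j * u j μ) * W l μ := by
            rw [Finset.sum_comm]
            apply Finset.sum_congr rfl
            intro μ _
            rw [Finset.sum_mul]
            apply Finset.sum_congr rfl
            intro j _
            ring
        _ = 0 := by
            apply Finset.sum_eq_zero
            intro μ _
            rw [h1 μ, zero_mul]
    have key : ∀ j : Fin m, (∀ b : Fin m, b < j → g b = 0) → g j = 0 := by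
      intro j IH
      have h0 := hsum j
      rw [Finset.sum_eq_single j] at h0
      · rcases mul_eq_zero.1 h0 with h | h
        · exact h
        · exact absurd h (hEd j)
      · intro b _ hbj
        rcases lt_or_gt_of_ne hbj with hb | hb
        · rw [IH b hb, zero_mul]
        · rw [hE0 b j hb, mul_zero]
      · intro h
        exact absurd (Finset.mem_univ j) h
    have main : ∀ (N : ℕ) (j : Fin m), (j : ℕ) ≤ N → g j = 0 := by
      intro N
      induction N with
      | zero =>
        intro j hj
        apply key
        intro b hb
        rw [Fin.lt_def] at hb
        omega
      | succ N IH =>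
        intro j hj
        apply key
        intro b hb
        rw [Fin.lt_def] at hb
        exact IH b (by omega)
    exact fun j => main j j le_rfl
  -- dimension count
  have hcard : Fintype.card (Sym (Fin (k + 1)) k) = (2 * k).choose k := by
    rw [Sym.card_sym_eq_multichoose]
    rw [Nat.multichoose_eq]
    congr 1
    simp
    omega
  have hfin : Module.finrank ℚ (Sym (Fin (k + 1)) k → ℚ) = Fintype.card (Sym (Fin (k + 1)) k) := Module.finrank_pi ℚ
  have := hli.fintype_card_le_finrank
  rw [hfin, hcard, Fintype.card_fin] at this
  omega


end CoreLB

lemma Hst_adj {i : ℕ} {j l : Fin i} :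
    (Hstaircase i).Adj (Sum.inl j) (Sum.inr l) ↔ l ≤ j := by
  constructor
  · rintro ⟨j', l', h, ⟨h1, h2⟩ | ⟨h1, h2⟩⟩
    · cases h1; cases h2; exact h
    · exact absurd h1 (by simp)
  · intro h; exact ⟨j, l, h, Or.inl ⟨rfl, rfl⟩⟩

lemma Hst_adj_shape {i : ℕ} {x y : Fin i ⊕ Fin i} (h : (Hstaircase i).Adj x y) :
    ∃ j l : Fin i, l ≤ j ∧ ((x = Sum.inl j ∧ y = Sum.inr l) ∨ (x = Sum.inr l ∧ y = Sum.inl j)) := h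

open scoped Classical in
/-- the coverage set appearing in `localCoverNumber`. -/
def coverSet {V : Type*} (H : SimpleGraph V) : Set ℕ :=
  {k | ∃ C : Finset H.Subgraph, (∀ G ∈ C, IsCompleteBipartite G.coe) ∧ C.sup id = ⊤ ∧
    ∀ v : V, (C.filter fun G => v ∈ G.verts).card ≤ k}

open scoped Classical in
lemma cbCN_eq_sInf {V : Type*} (H : SimpleGraph V) : cbCN H = sInf (coverSet H) := by
  rfl

section Build
variable {i : ℕ} (S T : Fin i → Finset (List Bool))
variable (hcross : ∀ j l : Fin i, ((S j ∩ T l).Nonempty ↔ l ≤ j))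

/-- the biclique subgraph associated with a ground element `c`. -/
def bic (c : List Bool) : (Hstaircase i).Subgraph where
  verts := {x | ∃ j : Fin i, x = Sum.inl j ∧ c ∈ S j} ∪
    {x | ∃ l : Fin i, x = Sum.inr l ∧ c ∈ T l}
  Adj x y := ∃ j l : Fin i, c ∈ S j ∧ c ∈ T l ∧
    ((x = Sum.inl j ∧ y = Sum.inr l) ∨ (x = Sum.inr l ∧ y = Sum.inl j))
  adj_sub := by
    rintro x y ⟨j, l, hS, hT, h⟩
    have hle : l ≤ j := (hcross j l).1 ⟨c, Finset.mem_inter.2 ⟨hS, hT⟩⟩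
    exact ⟨j, l, hle, h⟩
  edge_vert := by
    rintro x y ⟨j, l, hS, hT, ⟨h1, h2⟩ | ⟨h1, h2⟩⟩
    · exact Or.inl ⟨j, h1, hS⟩
    · exact Or.inr ⟨l, h1, hT⟩
  symm := by
    constructor
    rintro x y ⟨j, l, hS, hT, ⟨h1, h2⟩ | ⟨h1, h2⟩⟩
    · exact ⟨j, l, hS, hT, Or.inr ⟨h2, h1⟩⟩
    · exact ⟨j, l, hS, hT, Or.inl ⟨h2, h1⟩⟩

lemma bic_mem_verts_inl (c : List Bool) (j : Fin i) :
    (Sum.inl j : Fin i ⊕ Fin i) ∈ (bic S T hcross c).verts ↔ c ∈ S j := by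
  constructor
  · rintro (⟨j', h1, h2⟩ | ⟨l', h1, h2⟩)
    · cases h1; exact h2
    · exact absurd h1 (by simp)
  · intro h; exact Or.inl ⟨j, rfl, h⟩

lemma bic_mem_verts_inr (c : List Bool) (l : Fin i) :
    (Sum.inr l : Fin i ⊕ Fin i) ∈ (bic S T hcross c).verts ↔ c ∈ T l := by
  constructor
  · rintro (⟨j', h1, h2⟩ | ⟨l', h1, h2⟩)
    · exact absurd h1 (by simp)
    · cases h1; exact h2
  · intro h; exact Or.inr ⟨l, rfl, h⟩

lemma bic_cb (c : List Bool) : IsCompleteBipartite (bic S T hcross c).coe := by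
  refine ⟨{x | ∃ j : Fin i, (x : Fin i ⊕ Fin i) = Sum.inl j},
    {x | ∃ l : Fin i, (x : Fin i ⊕ Fin i) = Sum.inr l}, ?_, ?_, ?_⟩
  · rw [Set.disjoint_left]
    rintro x ⟨j, hj⟩ ⟨l, hl⟩
    rw [hj] at hl; exact absurd hl (by simp)
  · ext x
    simp only [Set.mem_union, Set.mem_univ, iff_true]
    rcases hx : (x : Fin i ⊕ Fin i) with j | l
    · exact Or.inl ⟨j, hx⟩
    · exact Or.inr ⟨l, hx⟩
  · rintro ⟨u, hu⟩ ⟨v, hv⟩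
    rw [Subgraph.coe_adj]
    constructor
    · rintro ⟨j, l, hS, hT, ⟨h1, h2⟩ | ⟨h1, h2⟩⟩
      · exact Or.inl ⟨⟨j, h1⟩, ⟨l, h2⟩⟩
      · exact Or.inr ⟨⟨l, h1⟩, ⟨j, h2⟩⟩
    · rintro (⟨⟨j, hj⟩, ⟨l, hl⟩⟩ | ⟨⟨l, hl⟩, ⟨j, hj⟩⟩)
      · have hj' : u = Sum.inl j := hj
        have hl' : v = Sum.inr l := hl
        have h1 : c ∈ S j := (bic_mem_verts_inl S T hcross c j).1 (hj' ▸ hu)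
        have h2 : c ∈ T l := (bic_mem_verts_inr S T hcross c l).1 (hl' ▸ hv)
        exact ⟨j, l, h1, h2, Or.inl ⟨hj', hl'⟩⟩
      · have hj' : v = Sum.inl j := hj
        have hl' : u = Sum.inr l := hl
        have h1 : c ∈ S j := (bic_mem_verts_inl S T hcross c j).1 (hj' ▸ hv)
        have h2 : c ∈ T l := (bic_mem_verts_inr S T hcross c l).1 (hl' ▸ hu)
        exact ⟨j, l, h1, h2, Or.inr ⟨hl', hj'⟩⟩

open scoped Classical in
include hcross in
lemma mem_coverSet_of_system :
    Finset.univ.sup (fun j : Fin i => max (S j).card (T j).card)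
      ∈ coverSet (Hstaircase i) := by
  classical
  set k := Finset.univ.sup (fun j : Fin i => max (S j).card (T j).card) with hk
  set ground : Finset (List Bool) := Finset.univ.biUnion (fun j : Fin i => S j ∪ T j) with hg
  set C : Finset (Hstaircase i).Subgraph := ground.image (fun c => bic S T hcross c) with hC
  refine ⟨C, ?_, ?_, ?_⟩
  · rintro G hG
    obtain ⟨c, _, rfl⟩ := Finset.mem_image.1 hG
    exact bic_cb S T hcross c
  · apply top_le_iff.1
    constructor
    · intro x _
      have hx : ∃ c ∈ ground, x ∈ (bic S T hcross c).verts := by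
        rcases x with j | l
        · obtain ⟨c, hc⟩ := (hcross j j).2 le_rfl
          have hcS := (Finset.mem_inter.1 hc).1
          refine ⟨c, Finset.mem_biUnion.2 ⟨j, Finset.mem_univ _, Finset.mem_union_left _ hcS⟩, ?_⟩
          exact (bic_mem_verts_inl S T hcross c j).2 hcS
        · obtain ⟨c, hc⟩ := (hcross l l).2 le_rfl
          have hcT := (Finset.mem_inter.1 hc).2
          refine ⟨c, Finset.mem_biUnion.2 ⟨l, Finset.mem_univ _, Finset.mem_union_right _ hcT⟩, ?_⟩
          exact (bic_mem_verts_inr S T hcross c l).2 hcT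
      obtain ⟨c, hcg, hxv⟩ := hx
      have hle : bic S T hcross c ≤ C.sup id := by
        have : bic S T hcross c ∈ C := Finset.mem_image.2 ⟨c, hcg, rfl⟩
        simpa using Finset.le_sup (f := id) this
      exact hle.1 hxv
    · intro x y hadj
      obtain ⟨j, l, hle, hsh⟩ := Hst_adj_shape hadj
      obtain ⟨c, hc⟩ := (hcross j l).2 hle
      have hcS := (Finset.mem_inter.1 hc).1
      have hcT := (Finset.mem_inter.1 hc).2
      have hcg : c ∈ ground :=
        Finset.mem_biUnion.2 ⟨j, Finset.mem_univ _, Finset.mem_union_left _ hcS⟩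
      have hGadj : (bic S T hcross c).Adj x y := ⟨j, l, hcS, hcT, hsh⟩
      have hle2 : bic S T hcross c ≤ C.sup id := by
        have : bic S T hcross c ∈ C := Finset.mem_image.2 ⟨c, hcg, rfl⟩
        simpa using Finset.le_sup (f := id) this
      exact hle2.2 hGadj
  · intro v
    have hsub : C.filter (fun G => v ∈ G.verts) ⊆
        (ground.filter (fun c => v ∈ (bic S T hcross c).verts)).image (fun c => bic S T hcross c) := by
      rw [hC, Finset.filter_image]
    rcases v with j | l
    · have : ground.filter (fun c => (Sum.inl j : Fin i ⊕ Fin i) ∈ (bic S T hcross c).verts) ⊆ S j := by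
        intro c hc
        have := (Finset.mem_filter.1 hc).2
        exact (bic_mem_verts_inl S T hcross c j).1 this
      calc (C.filter (fun G => (Sum.inl j : Fin i ⊕ Fin i) ∈ G.verts)).card
          ≤ _ := Finset.card_le_card hsub
        _ ≤ (ground.filter (fun c => (Sum.inl j : Fin i ⊕ Fin i) ∈ (bic S T hcross c).verts)).card :=
            Finset.card_image_le
        _ ≤ (S j).card := Finset.card_le_card this
        _ ≤ k := le_trans (le_max_left _ _)
            (Finset.le_sup (f := fun j : Fin i => max (S j).card (T j).card) (Finset.mem_univ j))
    · have : ground.filter (fun c => (Sum.inr l : Fin i ⊕ Fin i) ∈ (bic S T hcross c).verts) ⊆ T l := by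
        intro c hc
        have := (Finset.mem_filter.1 hc).2
        exact (bic_mem_verts_inr S T hcross c l).1 this
      calc (C.filter (fun G => (Sum.inr l : Fin i ⊕ Fin i) ∈ G.verts)).card
          ≤ _ := Finset.card_le_card hsub
        _ ≤ (ground.filter (fun c => (Sum.inr l : Fin i ⊕ Fin i) ∈ (bic S T hcross c).verts)).card :=
            Finset.card_image_le
        _ ≤ (T l).card := Finset.card_le_card this
        _ ≤ k := le_trans (le_max_right _ _)
            (Finset.le_sup (f := fun j : Fin i => max (S j).card (T j).card) (Finset.mem_univ l))
  
end Build


lemma Hst_no_rr {i : ℕ} {l l' : Fin i} : ¬ (Hstaircase i).Adj (Sum.inr l) (Sum.inr l') := by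
  rintro ⟨j, m, h, ⟨h1, h2⟩ | ⟨h1, h2⟩⟩
  · exact absurd h1 (by simp)
  · exact absurd h2 (by simp)

lemma sup_adj_elim {V : Type*} {G : SimpleGraph V} (C : Finset G.Subgraph) (x y : V)
    (h : (C.sup id).Adj x y) : ∃ A ∈ C, A.Adj x y := by
  classical
  induction C using Finset.induction_on with
  | empty => simp at h
  | insert _ _ hx ih =>
    rw [Finset.sup_insert] at h
    rcases (SimpleGraph.Subgraph.sup_adj).1 h with h1 | h1
    · exact ⟨_, Finset.mem_insert_self _ _, h1⟩
    · obtain ⟨A, hA, hA2⟩ := ih h1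
      exact ⟨A, Finset.mem_insert_of_mem hA, hA2⟩

open scoped Classical in
lemma lower_of_mem {i k : ℕ} (hk : k ∈ coverSet (Hstaircase i)) :
    i ≤ (2 * k).choose k + 1 := by
  classical
  obtain ⟨C, hcb, hsup, hloc⟩ := hk
  set f : (Hstaircase i).Subgraph → ℕ :=
    fun G => if h : G ∈ C then (C.equivFin ⟨G, h⟩ : ℕ) else 0 with hf
  have hfinj : ∀ G ∈ C, ∀ G' ∈ C, f G = f G' → G = G' := by
    intro G hG G' hG' h
    rw [hf] at h
    simp only [dif_pos hG, dif_pos hG'] at h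
    have h2 : C.equivFin ⟨G, hG⟩ = C.equivFin ⟨G', hG'⟩ := Fin.ext h
    have := C.equivFin.injective h2
    exact congrArg Subtype.val this
  set S : Fin i → Finset ℕ := fun j =>
    (C.filter (fun G => ∃ l : Fin i, G.Adj (Sum.inl j) (Sum.inr l))).image f with hS
  set T : Fin i → Finset ℕ := fun l =>
    (C.filter (fun G => ∃ j : Fin i, G.Adj (Sum.inl j) (Sum.inr l))).image f with hT
  have hScard : ∀ j, (S j).card ≤ k := by
    intro j
    calc (S j).card ≤ (C.filter (fun G => ∃ l : Fin i, G.Adj (Sum.inl j) (Sum.inr l))).card :=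
          Finset.card_image_le
      _ ≤ (C.filter (fun G => (Sum.inl j : Fin i ⊕ Fin i) ∈ G.verts)).card := by
          apply Finset.card_le_card
          intro G hG
          rw [Finset.mem_filter] at hG ⊢
          obtain ⟨h1, l, h2⟩ := hG
          exact ⟨h1, G.edge_vert h2⟩
      _ ≤ k := hloc _
  have hTcard : ∀ l, (T l).card ≤ k := by
    intro l
    calc (T l).card ≤ (C.filter (fun G => ∃ j : Fin i, G.Adj (Sum.inl j) (Sum.inr l))).card :=
          Finset.card_image_le
      _ ≤ (C.filter (fun G => (Sum.inr l : Fin i ⊕ Fin i) ∈ G.verts)).card := by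
          apply Finset.card_le_card
          intro G hG
          rw [Finset.mem_filter] at hG ⊢
          obtain ⟨h1, j, h2⟩ := hG
          exact ⟨h1, G.edge_vert h2.symm⟩
      _ ≤ k := hloc _
  have hne : ∀ j l : Fin i, l ≤ j → (S j ∩ T l).Nonempty := by
    intro j l hlj
    have htop : ((⊤ : (Hstaircase i).Subgraph)).Adj (Sum.inl j) (Sum.inr l) :=
      SimpleGraph.Subgraph.top_adj.2 (Hst_adj.2 hlj)
    rw [← hsup] at htop
    obtain ⟨G, hG, hGadj⟩ := sup_adj_elim C _ _ htop
    refine ⟨f G, Finset.mem_inter.2 ⟨?_, ?_⟩⟩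
    · exact Finset.mem_image_of_mem f (Finset.mem_filter.2 ⟨hG, l, hGadj⟩)
    · exact Finset.mem_image_of_mem f (Finset.mem_filter.2 ⟨hG, j, hGadj⟩)
  have hem : ∀ j l : Fin i, j < l → S j ∩ T l = ∅ := by
    intro j l hjl
    rw [Finset.eq_empty_iff_forall_notMem]
    intro x hx
    rcases Finset.mem_inter.1 hx with ⟨hx1, hx2⟩
    obtain ⟨G, hGf, hfG⟩ := Finset.mem_image.1 hx1
    obtain ⟨G', hGf', hfG'⟩ := Finset.mem_image.1 hx2
    rcases Finset.mem_filter.1 hGf with ⟨hGC, l1, e1⟩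
    rcases Finset.mem_filter.1 hGf' with ⟨hGC', j2, e2⟩
    have hGG : G = G' := hfinj G hGC G' hGC' (by rw [hfG, hfG'])
    subst hGG
    -- now G.Adj (inl j) (inr l1) and G.Adj (inl j2) (inr l)
    obtain ⟨A, B, hdisj, huniv, hadj⟩ := hcb G hGC
    have hu : (Sum.inl j : Fin i ⊕ Fin i) ∈ G.verts := G.edge_vert e1
    have hw1 : (Sum.inr l1 : Fin i ⊕ Fin i) ∈ G.verts := G.edge_vert e1.symm
    have hu2 : (Sum.inl j2 : Fin i ⊕ Fin i) ∈ G.verts := G.edge_vert e2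
    have hw : (Sum.inr l : Fin i ⊕ Fin i) ∈ G.verts := G.edge_vert e2.symm
    set u : G.verts := ⟨Sum.inl j, hu⟩
    set w1 : G.verts := ⟨Sum.inr l1, hw1⟩
    set u2 : G.verts := ⟨Sum.inl j2, hu2⟩
    set w : G.verts := ⟨Sum.inr l, hw⟩
    have a1 : G.coe.Adj u w1 := e1
    have a2 : G.coe.Adj u2 w := e2
    have hGjl : G.coe.Adj u w := by
      rcases (hadj u w1).1 a1 with ⟨huA, hw1B⟩ | ⟨huB, hw1A⟩
      · rcases (hadj u2 w).1 a2 with ⟨hu2A, hwB⟩ | ⟨hu2B, hwA⟩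
        · exact (hadj u w).2 (Or.inl ⟨huA, hwB⟩)
        · -- w ∈ A, w1 ∈ B : adjacent inr-inr, contradiction
          have : G.coe.Adj w w1 := (hadj w w1).2 (Or.inl ⟨hwA, hw1B⟩)
          exact absurd (G.adj_sub this) Hst_no_rr
      · rcases (hadj u2 w).1 a2 with ⟨hu2A, hwB⟩ | ⟨hu2B, hwA⟩
        · have : G.coe.Adj w1 w := (hadj w1 w).2 (Or.inl ⟨hw1A, hwB⟩)
          exact absurd (G.adj_sub this) Hst_no_rr
        · exact (hadj u w).2 (Or.inr ⟨huB, hwA⟩)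
    have : (Hstaircase i).Adj (Sum.inl j) (Sum.inr l) := G.adj_sub hGjl
    have hle : l ≤ j := Hst_adj.1 this
    exact absurd hle (not_le.2 hjl)
  exact core_lb S T hScard hTcard hne hem



 
section Analysis
open Real
lemma mul_sqrt_le_mul_sqrt {a b c d : ℝ} (ha : 0 ≤ a) (hc : 0 ≤ c)
    (h : a^2*b ≤ c^2*d) : a * Real.sqrt b ≤ c * Real.sqrt d := by
  have h1 : Real.sqrt (a^2*b) ≤ Real.sqrt (c^2*d) := Real.sqrt_le_sqrt h
  rwa [Real.sqrt_mul (sq_nonneg a), Real.sqrt_mul (sq_nonneg c),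
    Real.sqrt_sq ha, Real.sqrt_sq hc] at h1

lemma binom_lower : ∀ k : ℕ, 1 ≤ k →
    (4:ℝ)^k ≤ 2 * Real.sqrt k * (Nat.centralBinom k : ℝ) := by
  intro k
  induction k with
  | zero => omega
  | succ n IH =>
    intro _
    rcases Nat.eq_zero_or_pos n with rfl | hn
    · have : Nat.centralBinom 1 = 2 := by decide
      rw [this]
      simp [Real.sqrt_one]
      norm_num
    · have IH' := IH hn
      have hid : ((n:ℝ) + 1) * (Nat.centralBinom (n+1) : ℝ)
          = 2 * (2*(n:ℝ) + 1) * (Nat.centralBinom n : ℝ) := by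
        have := Nat.succ_mul_centralBinom_succ n
        have h2 : (((n + 1) * Nat.centralBinom (n + 1) : ℕ) : ℝ)
            = ((2 * (2 * n + 1) * Nat.centralBinom n : ℕ) : ℝ) := by rw [this]
        push_cast at h2
        linarith
      have hB : (0:ℝ) ≤ (Nat.centralBinom n : ℝ) := Nat.cast_nonneg _
      have hstep : 8 * ((n:ℝ)+1) * Real.sqrt n ≤ 4 * (2*(n:ℝ)+1) * Real.sqrt (n+1) := by
        have := mul_sqrt_le_mul_sqrt (a := 8*((n:ℝ)+1)) (b := (n:ℝ)) (c := 4*(2*(n:ℝ)+1))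
          (d := (n:ℝ)+1) (by positivity) (by positivity) (by nlinarith [Nat.cast_nonneg (α := ℝ) n])
        linarith [this]
      have hmain : ((n:ℝ)+1) * (4:ℝ)^(n+1) ≤ ((n:ℝ)+1) * (2 * Real.sqrt (n+1) * (Nat.centralBinom (n+1) : ℝ)) := by
        calc ((n:ℝ)+1) * (4:ℝ)^(n+1) = 4*((n:ℝ)+1) * (4:ℝ)^n := by ring
          _ ≤ 4*((n:ℝ)+1) * (2 * Real.sqrt n * (Nat.centralBinom n : ℝ)) := by
              apply mul_le_mul_of_nonneg_left IH' (by positivity)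
          _ = (8 * ((n:ℝ)+1) * Real.sqrt n) * (Nat.centralBinom n : ℝ) := by ring
          _ ≤ (4 * (2*(n:ℝ)+1) * Real.sqrt (n+1)) * (Nat.centralBinom n : ℝ) :=
              mul_le_mul_of_nonneg_right hstep hB
          _ = 2 * Real.sqrt (n+1) * (2 * (2*(n:ℝ)+1) * (Nat.centralBinom n : ℝ)) := by ring
          _ = 2 * Real.sqrt (n+1) * (((n:ℝ) + 1) * (Nat.centralBinom (n+1) : ℝ)) := by rw [← hid]
          _ = ((n:ℝ)+1) * (2 * Real.sqrt (n+1) * (Nat.centralBinom (n+1) : ℝ)) := by ring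
      have hpos : (0:ℝ) < (n:ℝ) + 1 := by positivity
      have := le_of_mul_le_mul_left hmain hpos
      simpa using this

lemma binom_upper : ∀ k : ℕ,
    (Nat.centralBinom k : ℝ) * Real.sqrt (k+1) ≤ (4:ℝ)^k := by
  intro k
  induction k with
  | zero =>
    have h1 : Nat.centralBinom 0 = 1 := by decide
    rw [h1]
    have h2 : Real.sqrt ((0:ℕ)+1) = 1 := by norm_num [Real.sqrt_one]
    rw [h2]
    norm_num
  | succ n IH =>
    have hid : ((n:ℝ) + 1) * (Nat.centralBinom (n+1) : ℝ)
        = 2 * (2*(n:ℝ) + 1) * (Nat.centralBinom n : ℝ) := by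
      have := Nat.succ_mul_centralBinom_succ n
      have h2 : (((n + 1) * Nat.centralBinom (n + 1) : ℕ) : ℝ)
          = ((2 * (2 * n + 1) * Nat.centralBinom n : ℕ) : ℝ) := by rw [this]
      push_cast at h2
      linarith
    have hB : (0:ℝ) ≤ (Nat.centralBinom n : ℝ) := Nat.cast_nonneg _
    have hstep : 2 * (2*(n:ℝ)+1) * Real.sqrt ((n:ℝ)+1+1) ≤ 4*((n:ℝ)+1) * Real.sqrt ((n:ℝ)+1) := by
      have := mul_sqrt_le_mul_sqrt (a := 2*(2*(n:ℝ)+1)) (b := (n:ℝ)+1+1) (c := 4*((n:ℝ)+1))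
        (d := (n:ℝ)+1) (by positivity) (by positivity) (by nlinarith [Nat.cast_nonneg (α := ℝ) n])
      linarith [this]
    have hmain : ((n:ℝ)+1) * ((Nat.centralBinom (n+1) : ℝ) * Real.sqrt ((n:ℝ)+1+1))
        ≤ ((n:ℝ)+1) * (4:ℝ)^(n+1) := by
      calc ((n:ℝ)+1) * ((Nat.centralBinom (n+1) : ℝ) * Real.sqrt ((n:ℝ)+1+1))
          = (((n:ℝ)+1) * (Nat.centralBinom (n+1) : ℝ)) * Real.sqrt ((n:ℝ)+1+1) := by ring
        _ = (2 * (2*(n:ℝ) + 1) * (Nat.centralBinom n : ℝ)) * Real.sqrt ((n:ℝ)+1+1) := by rw [hid]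
        _ = (Nat.centralBinom n : ℝ) * (2 * (2*(n:ℝ)+1) * Real.sqrt ((n:ℝ)+1+1)) := by ring
        _ ≤ (Nat.centralBinom n : ℝ) * (4*((n:ℝ)+1) * Real.sqrt ((n:ℝ)+1)) :=
            mul_le_mul_of_nonneg_left hstep hB
        _ = 4*((n:ℝ)+1) * ((Nat.centralBinom n : ℝ) * Real.sqrt ((n:ℝ)+1)) := by ring
        _ ≤ 4*((n:ℝ)+1) * (4:ℝ)^n := by
            apply mul_le_mul_of_nonneg_left IH (by positivity)
        _ = ((n:ℝ)+1) * (4:ℝ)^(n+1) := by ring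
    have hpos : (0:ℝ) < (n:ℝ) + 1 := by positivity
    have h3 := le_of_mul_le_mul_left hmain hpos
    have hcast : ((n:ℝ) + 1 + 1) = (((n+1 : ℕ):ℝ) + 1) := by push_cast; ring
    rw [hcast] at h3
    exact h3



lemma two_rpow_two : (2:ℝ) ^ (2:ℝ) = 4 := by
  rw [show (2:ℝ) = ((2:ℕ):ℝ) from by norm_num, Real.rpow_natCast]
  norm_num

lemma sqrt_as_rpow {L : ℝ} (hL : 0 < L) :
    (2:ℝ) ^ ((1/2) * Real.logb 2 L) = Real.sqrt L := by
  rw [Real.sqrt_eq_rpow, mul_comm, Real.rpow_mul (by norm_num : (0:ℝ) ≤ 2),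
    Real.rpow_logb (by norm_num) (by norm_num) hL]

lemma exists_K (i : ℕ) (hi : 4 ≤ i) :
    ∃ K : ℕ, 1 ≤ K ∧
      ((K:ℝ) ≤ (1/2) * Real.logb 2 i + (1/4) * Real.logb 2 (Real.logb 2 i) + 2) ∧
      i + 1 ≤ Nat.centralBinom K := by
  have hi4 : (4:ℝ) ≤ (i:ℝ) := by exact_mod_cast hi
  have hipos : (0:ℝ) < i := by linarith
  set L : ℝ := Real.logb 2 i with hLdef
  have hL2 : 2 ≤ L := by
    rw [hLdef, Real.le_logb_iff_rpow_le (by norm_num) hipos, two_rpow_two]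
    exact hi4
  have hLpos : 0 < L := by linarith
  have hlogb0 : 0 ≤ Real.logb 2 L := Real.logb_nonneg (by norm_num) (by linarith)
  set F : ℝ := (1/2) * L + (1/4) * Real.logb 2 L with hFdef
  have hF0 : 0 ≤ F := by rw [hFdef]; positivity
  set K : ℕ := ⌈F⌉₊ + 1 with hKdef
  have hK1 : 1 ≤ K := by omega
  have hKlb : F + 1 ≤ (K:ℝ) := by
    have := Nat.le_ceil F
    rw [hKdef]; push_cast; linarith
  have hKub : (K:ℝ) ≤ F + 2 := by
    have := Nat.ceil_lt_add_one hF0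
    rw [hKdef]; push_cast; linarith
  have hlogLle : Real.logb 2 L ≤ (3/2) * (L - 1) := by
    have h1 : Real.log L ≤ L - 1 := Real.log_le_sub_one_of_pos hLpos
    have h2 : (0.6931471803 : ℝ) < Real.log 2 := Real.log_two_gt_d9
    have h3 : (0:ℝ) ≤ L - 1 := by linarith
    rw [Real.logb]
    rw [div_le_iff₀ (by linarith : (0:ℝ) < Real.log 2)]
    nlinarith
  have h9K16L : 9 * (K:ℝ) ≤ 16 * L := by
    rw [hFdef] at hKub
    nlinarith
  -- 2 * sqrt K * (i+1) ≤ 4^K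
  have h4K : (4:ℝ)^K = (2:ℝ) ^ (((2*K : ℕ)):ℝ) := by
    rw [Real.rpow_natCast, show (4:ℝ) = 2^2 from by norm_num, ← pow_mul]
  have h2K : 2*F + 2 ≤ (((2*K : ℕ)):ℝ) := by
    have hceil := Nat.le_ceil F
    push_cast
    linarith
  have hmono : (2:ℝ) ^ (2*F + 2) ≤ (2:ℝ) ^ (((2*K : ℕ)):ℝ) :=
    (Real.rpow_le_rpow_left_iff (by norm_num)).2 h2K
  have hiL : (2:ℝ) ^ L = i := Real.rpow_logb (by norm_num) (by norm_num) hipos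
  have hexpand : (2:ℝ) ^ (2*F + 2) = 4 * i * Real.sqrt L := by
    have he : 2*F + 2 = L + ((1/2) * Real.logb 2 L + (2:ℝ)) := by rw [hFdef]; ring
    rw [he, Real.rpow_add (by norm_num), Real.rpow_add (by norm_num),
      hiL, sqrt_as_rpow hLpos, two_rpow_two]
    ring
  have hsK : (0:ℝ) < Real.sqrt K := Real.sqrt_pos.2 (by exact_mod_cast hK1)
  have hstep : 3 * Real.sqrt K ≤ 4 * Real.sqrt L := by
    apply mul_sqrt_le_mul_sqrt (by norm_num) (by norm_num)
    nlinarith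
  have hkey : 2 * Real.sqrt K * ((i:ℝ) + 1) ≤ (4:ℝ)^K := by
    calc 2 * Real.sqrt K * ((i:ℝ) + 1) ≤ 2 * Real.sqrt K * ((3/2) * i) := by
          apply mul_le_mul_of_nonneg_left (by linarith) (by positivity)
      _ = (3 * Real.sqrt K) * i := by ring
      _ ≤ (4 * Real.sqrt L) * i := mul_le_mul_of_nonneg_right hstep (by positivity)
      _ = 4 * i * Real.sqrt L := by ring
      _ = (2:ℝ) ^ (2*F + 2) := hexpand.symm
      _ ≤ (2:ℝ) ^ (((2*K : ℕ)):ℝ) := hmono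
      _ = (4:ℝ)^K := h4K.symm
  have hbl := binom_lower K hK1
  have hfinal : ((i:ℝ) + 1) ≤ (Nat.centralBinom K : ℝ) := by
    have h5 : 2 * Real.sqrt K * ((i:ℝ)+1) ≤ 2 * Real.sqrt K * (Nat.centralBinom K : ℝ) := by
      calc 2 * Real.sqrt K * ((i:ℝ)+1) ≤ (4:ℝ)^K := hkey
        _ ≤ 2 * Real.sqrt K * (Nat.centralBinom K : ℝ) := hbl
    exact le_of_mul_le_mul_left h5 (by positivity)
  refine ⟨K, hK1, by rw [hFdef, hLdef] at hKub; exact hKub, ?_⟩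
  exact_mod_cast hfinal

lemma c_lower (i c : ℕ) (hi : 16 ≤ i) (hc : i ≤ Nat.centralBinom c + 1) :
    (1/2) * Real.logb 2 i + (1/4) * Real.logb 2 (Real.logb 2 i) - 2 ≤ (c:ℝ) := by
  have hi16 : (16:ℝ) ≤ (i:ℝ) := by exact_mod_cast hi
  have hipos : (0:ℝ) < i := by linarith
  set L : ℝ := Real.logb 2 i with hLdef
  have hL4 : 4 ≤ L := by
    rw [hLdef, Real.le_logb_iff_rpow_le (by norm_num) hipos]
    rw [show (4:ℝ) = ((4:ℕ):ℝ) from by norm_num, Real.rpow_natCast]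
    norm_num
    exact hi
  have hLpos : 0 < L := by linarith
  have hbu := binom_upper c
  have hCB : ((i:ℝ) - 1) ≤ (Nat.centralBinom c : ℝ) := by
    have : (i:ℝ) ≤ (Nat.centralBinom c : ℝ) + 1 := by exact_mod_cast hc
    linarith
  have hsqrt1 : (1:ℝ) ≤ Real.sqrt ((c:ℝ)+1) := by
    have h0 : (1:ℝ) ≤ (c:ℝ) + 1 := by
      have : (0:ℝ) ≤ (c:ℝ) := Nat.cast_nonneg c
      linarith
    calc (1:ℝ) = Real.sqrt 1 := Real.sqrt_one.symm
      _ ≤ Real.sqrt ((c:ℝ)+1) := Real.sqrt_le_sqrt h0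
  have hCB0 : (0:ℝ) ≤ (Nat.centralBinom c : ℝ) := Nat.cast_nonneg _
  have hcast : ((c:ℝ) + 1) = (((c:ℕ):ℝ) + 1) := by norm_num
  have hbu' : (Nat.centralBinom c : ℝ) * Real.sqrt ((c:ℝ)+1) ≤ (4:ℝ)^c := hbu
  have hcrude : (i:ℝ) - 1 ≤ (4:ℝ)^c := by
    calc (i:ℝ) - 1 ≤ (Nat.centralBinom c : ℝ) := hCB
      _ = (Nat.centralBinom c : ℝ) * 1 := by ring
      _ ≤ (Nat.centralBinom c : ℝ) * Real.sqrt ((c:ℝ)+1) :=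
          mul_le_mul_of_nonneg_left hsqrt1 hCB0
      _ ≤ (4:ℝ)^c := hbu'
  have h4c : (4:ℝ)^c = (2:ℝ) ^ (((2*c : ℕ)):ℝ) := by
    rw [Real.rpow_natCast, show (4:ℝ) = 2^2 from by norm_num, ← pow_mul]
  have hiL : (2:ℝ) ^ L = i := Real.rpow_logb (by norm_num) (by norm_num) hipos
  have hhalf : (2:ℝ) ^ (L - 1) = (i:ℝ)/2 := by
    rw [Real.rpow_sub (by norm_num), hiL]
    norm_num
  have hcrude2 : L - 1 ≤ ((2*c : ℕ):ℝ) := by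
    rw [← Real.rpow_le_rpow_left_iff (x := (2:ℝ)) (by norm_num), hhalf, ← h4c]
    calc (i:ℝ)/2 ≤ (i:ℝ) - 1 := by linarith
      _ ≤ (4:ℝ)^c := hcrude
  have hc1 : L/4 ≤ (c:ℝ) + 1 := by
    have : ((2*c:ℕ):ℝ) = 2*(c:ℝ) := by push_cast; ring
    rw [this] at hcrude2
    linarith
  have hsqrt4 : Real.sqrt (4:ℝ) = 2 := by
    rw [show (4:ℝ) = 2^2 from by norm_num, Real.sqrt_sq (by norm_num)]
  have hsqrtL4 : Real.sqrt (L/4) = Real.sqrt L / 2 := by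
    rw [Real.sqrt_div (le_of_lt hLpos) 4, hsqrt4]
  have hsqrtc : Real.sqrt L / 2 ≤ Real.sqrt ((c:ℝ)+1) := by
    rw [← hsqrtL4]
    exact Real.sqrt_le_sqrt hc1
  have hmain : ((i:ℝ)/2) * (Real.sqrt L / 2) ≤ (4:ℝ)^c := by
    calc ((i:ℝ)/2) * (Real.sqrt L / 2) ≤ ((i:ℝ) - 1) * Real.sqrt ((c:ℝ)+1) := by
          apply mul_le_mul (by linarith) hsqrtc (by positivity) (by linarith)
      _ ≤ (Nat.centralBinom c : ℝ) * Real.sqrt ((c:ℝ)+1) :=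
          mul_le_mul_of_nonneg_right hCB (by positivity)
      _ ≤ (4:ℝ)^c := hbu'
  have hexpand : (2:ℝ) ^ (L + (1/2) * Real.logb 2 L - 2) = ((i:ℝ)/2) * (Real.sqrt L / 2) := by
    rw [Real.rpow_sub (by norm_num), Real.rpow_add (by norm_num),
      hiL, sqrt_as_rpow hLpos, two_rpow_two]
    ring
  have hfin : L + (1/2) * Real.logb 2 L - 2 ≤ ((2*c : ℕ):ℝ) := by
    rw [← Real.rpow_le_rpow_left_iff (x := (2:ℝ)) (by norm_num), hexpand, ← h4c]
    exact hmain
  have hcc : ((2*c:ℕ):ℝ) = 2*(c:ℝ) := by push_cast; ring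
  rw [hcc] at hfin
  linarith


end Analysis
end CbCNAux

namespace CbCNAux

lemma exists_system (p q i : ℕ) (hi : i + 1 ≤ (p + q).choose p) :
    ∃ S T : Fin i → Finset Gd, (∀ j, (S j).card ≤ p) ∧ (∀ j, (T j).card ≤ q) ∧
      ∀ j l : Fin i, ((S j ∩ T l).Nonempty ↔ l ≤ j) := by
  have hlen := sys_length p q []
  have hch : 1 ≤ (p + q).choose p := Nat.choose_pos (by omega)
  have hi' : i ≤ (sys p q []).length := by omega
  refine ⟨fun j => ((sys p q [])[(j:ℕ)]'(lt_of_lt_of_le j.isLt hi')).1,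
    fun l => ((sys p q [])[(l:ℕ)]'(lt_of_lt_of_le l.isLt hi')).2, ?_, ?_, ?_⟩
  · intro j; exact (sys_cards p q [] _ (List.getElem_mem _)).1
  · intro l; exact (sys_cards p q [] _ (List.getElem_mem _)).2
  · intro j l
    rw [Fin.le_def]
    exact sys_cross p q [] (j:ℕ) (l:ℕ) (lt_of_lt_of_le j.isLt hi') (lt_of_lt_of_le l.isLt hi')

open scoped Classical in
lemma coverSet_mono {V : Type*} {H : SimpleGraph V} {a b : ℕ} (hab : a ≤ b)
    (ha : a ∈ coverSet H) : b ∈ coverSet H := by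
  obtain ⟨C, h1, h2, h3⟩ := ha
  exact ⟨C, h1, h2, fun v => le_trans (h3 v) hab⟩

lemma mem_coverSet_of_centralBinom {i k : ℕ} (h : i + 1 ≤ Nat.centralBinom k) :
    k ∈ coverSet (Hstaircase i) := by
  have h' : i + 1 ≤ (k + k).choose k := by
    have h2 : Nat.centralBinom k = (2 * k).choose k := rfl
    rw [h2, two_mul] at h
    exact h
  obtain ⟨S, T, hS, hT, hcross⟩ := exists_system k k i h'
  apply coverSet_mono _ (mem_coverSet_of_system S T hcross)
  apply Finset.sup_le
  intro j _
  exact max_le (hS j) (hT j)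

lemma cbCN_le_of_centralBinom {i k : ℕ} (h : i + 1 ≤ Nat.centralBinom k) :
    cbCN (Hstaircase i) ≤ k := by
  rw [cbCN_eq_sInf]
  exact Nat.sInf_le (mem_coverSet_of_centralBinom h)

end CbCNAux

open CbCNAux in
/-- **Theorem.** For every `i ≥ 2`,
`cn_ℓ(𝔅ℭ, H_i) ≤ (1/2)·log₂ i + (1/4)·log₂ log₂ i + 2`, and more generally
`cn_ℓ(𝔅ℭ, H_i) = (1/2)·log₂ i + (1/4)·log₂ log₂ i + O(1)` as `i → ∞`. -/
theorem cbCN_Hstaircase :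
    (∀ i : ℕ, 2 ≤ i → (cbCN (Hstaircase i) : ℝ) ≤
      (1 / 2) * Real.logb 2 i + (1 / 4) * Real.logb 2 (Real.logb 2 i) + 2) ∧
    (∃ C : ℝ, ∃ N : ℕ, ∀ i : ℕ, N ≤ i →
      |(cbCN (Hstaircase i) : ℝ) -
        ((1 / 2) * Real.logb 2 i + (1 / 4) * Real.logb 2 (Real.logb 2 i))| ≤ C) := by
  have upper : ∀ i : ℕ, 2 ≤ i → (cbCN (Hstaircase i) : ℝ) ≤
      (1 / 2) * Real.logb 2 i + (1 / 4) * Real.logb 2 (Real.logb 2 i) + 2 := by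
    intro i hi
    rcases le_or_gt 4 i with h4 | h4
    · obtain ⟨K, hK1, hKle, hKbin⟩ := exists_K i h4
      have h1 : cbCN (Hstaircase i) ≤ K := cbCN_le_of_centralBinom hKbin
      have h2 : ((cbCN (Hstaircase i) : ℕ) : ℝ) ≤ (K:ℝ) := Nat.cast_le.2 h1
      linarith
    · -- i = 2 or 3
      have hb : Nat.centralBinom 2 = 6 := by decide
      have h1 : cbCN (Hstaircase i) ≤ 2 := cbCN_le_of_centralBinom (by omega)
      have h2 : ((cbCN (Hstaircase i) : ℕ) : ℝ) ≤ (2:ℝ) := by exact_mod_cast h1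
      have hi2 : (2:ℝ) ≤ (i:ℝ) := by exact_mod_cast hi
      have hipos : (0:ℝ) < (i:ℝ) := by linarith
      have hL1 : 1 ≤ Real.logb 2 i := by
        rw [Real.le_logb_iff_rpow_le (by norm_num) hipos, Real.rpow_one]
        exact hi2
      have hlogb2 : 0 ≤ Real.logb 2 (Real.logb 2 i) :=
        Real.logb_nonneg (by norm_num) hL1
      linarith
  refine ⟨upper, 2, 16, ?_⟩
  intro i hi16
  have hi4 : 4 ≤ i := by omega
  obtain ⟨K, hK1, hKle, hKbin⟩ := exists_K i hi4
  have hup := upper i (by omega)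
  have hne : (coverSet (Hstaircase i)).Nonempty := ⟨K, mem_coverSet_of_centralBinom hKbin⟩
  have hcmem : cbCN (Hstaircase i) ∈ coverSet (Hstaircase i) := by
    rw [cbCN_eq_sInf]
    exact Nat.sInf_mem hne
  have hle : i ≤ (2 * cbCN (Hstaircase i)).choose (cbCN (Hstaircase i)) + 1 :=
    lower_of_mem hcmem
  have hle' : i ≤ Nat.centralBinom (cbCN (Hstaircase i)) + 1 := hle
  have hlow := c_lower i (cbCN (Hstaircase i)) hi16 hle'
  rw [abs_le]
  constructor <;> linarith
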